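/- Let I : ℝ² → ℝ be integrable, let a, β, α ∈ ℝ, Δt > 0, w > 0, let W be the indicator function of [−w/2, w/2]², and set Ī = ∫_{ℝ²} I. Suppose K_n, K_{n+1} : ℝ² → ℝ are integrable and satisfy the discretized linearized gradient descent update K_{n+1} = K_n − Δt·[ (a/2)·( Ī·W + β·((K_n ⋆ I) ⋆ I) ) + α·K_n ]. Then for every ω ∈ ℝ², the Fourier transforms satisfy K̂_{n+1}(ω) = A(ω)·K̂_n(ω) − (a/2)·Δt·Ī·Ŵ(ω), where the amplifier is A(ω) = 1 − Δt·(α + (1/2)·a·β·|Î(ω)|²) and Ŵ is the Fourier transform of W. -/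

import Mathlib

/-!
Cross-correlation with `f` is convolution with the reflection `f (-·)`, and for real `f` the
Fourier transform of the reflection is `conj f̂`. Hence `(K ⋆ I) ⋆ I` has transform
`conj (conj K̂ · Î) · Î = |Î|² K̂`, and the update, being linear, transforms term by term.
-/

open MeasureTheory FourierTransform

/-- The cross-correlation `(f ⋆ g)(z) = ∫_{ℝ²} f(x)·g(x + z) dx`. -/
noncomputable def crossCorr (f g : EuclideanSpace ℝ (Fin 2) → ℝ)
    (z : EuclideanSpace ℝ (Fin 2)) : ℝ :=
  ∫ x : EuclideanSpace ℝ (Fin 2), f x * g (x + z)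

open scoped RealInnerProductSpace ComplexConjugate Convolution

namespace Real

variable {V E : Type*} [NormedAddCommGroup V] [InnerProductSpace ℝ V] [MeasurableSpace V]
  [BorelSpace V] [FiniteDimensional ℝ V] [NormedAddCommGroup E] [NormedSpace ℂ E]

theorem fourier_add {f g : V → E} (hf : Integrable f) (hg : Integrable g) :
    𝓕 (f + g) = 𝓕 f + 𝓕 g :=
  VectorFourier.fourierIntegral_add continuous_fourierChar
    (innerSL ℝ (E := V)).continuous₂ hf hg

theorem fourier_const_smul (c : ℂ) (f : V → E) : 𝓕 (c • f) = c • 𝓕 f :=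
  VectorFourier.fourierIntegral_const_smul _ _ _ f c

theorem fourier_conj (f : V → ℂ) (ω : V) :
    𝓕 (fun x => conj (f x)) ω = conj (𝓕 f (-ω)) := by
  rw [fourier_eq, fourier_eq, ← integral_conj]
  congr 1 with v
  rw [inner_neg_right, neg_neg, Circle.smul_def, Circle.smul_def, smul_eq_mul, smul_eq_mul,
    map_mul, ← Circle.coe_inv_eq_conj, ← AddChar.map_neg_eq_inv]

theorem fourier_ofReal_comp_neg (f : V → ℝ) (ω : V) :
    𝓕 (fun x => (f (-x) : ℂ)) ω = conj (𝓕 (fun x => (f x : ℂ)) ω) := by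
  calc 𝓕 (fun x => (f (-x) : ℂ)) ω = 𝓕 (fun x => (f x : ℂ)) (-ω) :=
        fourier_comp_linearIsometry (LinearIsometryEquiv.neg ℝ) (fun x => (f x : ℂ)) ω
    _ = 𝓕 (fun x => conj (f x : ℂ)) (-ω) := by simp only [Complex.conj_ofReal]
    _ = conj (𝓕 (fun x => (f x : ℂ)) ω) := by rw [fourier_conj, neg_neg]

end Real

local notation "ℝ²" => EuclideanSpace ℝ (Fin 2)

theorem ofReal_crossCorr (f g : ℝ² → ℝ) :
    (fun z => (crossCorr f g z : ℂ)) =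
      (fun x => (f (-x) : ℂ)) ⋆[ContinuousLinearMap.mul ℂ ℂ] (fun x => (g x : ℂ)) := by
  ext z
  rw [convolution_def, crossCorr, ← integral_complex_ofReal, ← integral_neg_eq_self]
  simp [sub_eq_neg_add]

theorem integrable_crossCorr {f g : ℝ² → ℝ} (hf : Integrable f) (hg : Integrable g) :
    Integrable (crossCorr f g) := by
  have h := (hf.comp_neg.ofReal.integrable_convolution (ContinuousLinearMap.mul ℂ ℂ)
    (hg.ofReal (𝕜 := ℂ))).re
  simpa [← ofReal_crossCorr] using h

theorem fourier_crossCorr {f g : ℝ² → ℝ} (hf : Integrable f) (hg : Integrable g) (ω : ℝ²) :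
    𝓕 (fun z => (crossCorr f g z : ℂ)) ω =
      conj (𝓕 (fun x => (f x : ℂ)) ω) * 𝓕 (fun x => (g x : ℂ)) ω := by
  rw [ofReal_crossCorr, ← Real.fourier_ofReal_comp_neg]
  exact Real.fourier_mul_convolution_eq hf.comp_neg.ofReal hg.ofReal ω

theorem fourier_crossCorr_crossCorr {f g : ℝ² → ℝ} (hf : Integrable f) (hg : Integrable g)
    (ω : ℝ²) :
    𝓕 (fun z => (crossCorr (crossCorr f g) g z : ℂ)) ω =
      (‖𝓕 (fun x => (g x : ℂ)) ω‖ : ℂ) ^ 2 * 𝓕 (fun x => (f x : ℂ)) ω := by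
  rw [fourier_crossCorr (integrable_crossCorr hf hg) hg, fourier_crossCorr hf hg, map_mul,
    Complex.conj_conj, ← Complex.mul_conj']
  ring

theorem EuclideanSpace.isCompact_abs_le {ι : Type*} [Fintype ι] (r : ℝ) :
    IsCompact {x : EuclideanSpace ℝ ι | ∀ i, |x i| ≤ r} := by
  have h := (EuclideanSpace.equiv ι ℝ).toHomeomorph.isCompact_preimage.2
    (isCompact_univ_pi fun _ => isCompact_Icc (a := -r) (b := r))
  convert h using 1
  ext x
  simp [abs_le, Pi.le_def, forall_and]

theorem fourier_linearized_cnn_update_general (I Kn Knext : EuclideanSpace ℝ (Fin 2) → ℝ)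
    (a β α Δt w : ℝ)
    (hI : Integrable I) (hKn : Integrable Kn)
    (W : EuclideanSpace ℝ (Fin 2) → ℝ)
    (hW : W = Set.indicator {x : EuclideanSpace ℝ (Fin 2) | ∀ i, |x i| ≤ w / 2}
      (fun _ => (1 : ℝ)))
    (hupdate : Knext = fun z => Kn z -
      Δt * (a / 2 * ((∫ x, I x) * W z + β * crossCorr (crossCorr Kn I) I z) + α * Kn z)) :
    ∀ ω : EuclideanSpace ℝ (Fin 2),
      𝓕 (fun x => (Knext x : ℂ)) ω =
        (1 - Δt * (α + 1 / 2 * a * β *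
            (‖𝓕 (fun x => (I x : ℂ)) ω‖ : ℂ) ^ 2)) *
          𝓕 (fun x => (Kn x : ℂ)) ω -
        (a / 2 * Δt * (∫ x, I x)) * 𝓕 (fun x => (W x : ℂ)) ω := by
  intro ω
  have hsquare := EuclideanSpace.isCompact_abs_le (ι := Fin 2) (w / 2)
  have hWint : Integrable W := hW ▸
    (integrableOn_const hsquare.measure_lt_top.ne).integrable_indicator
      hsquare.isClosed.measurableSet
  have hCC := integrable_crossCorr (integrable_crossCorr hKn hI) hI
  have hdecomp : (fun x => (Knext x : ℂ)) =
      ((1 - Δt * α : ℂ) • (fun x => (Kn x : ℂ)) +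
        (-(a / 2 * Δt * ∫ x, I x) : ℂ) • (fun x => (W x : ℂ))) +
      (-(Δt * a / 2 * β) : ℂ) • (fun x => (crossCorr (crossCorr Kn I) I x : ℂ)) := by
    ext x
    simp only [hupdate, Pi.add_apply, Pi.smul_apply, smul_eq_mul]
    push_cast
    ring
  rw [hdecomp, Real.fourier_add ((hKn.ofReal.smul _).add (hWint.ofReal.smul _))
      (hCC.ofReal.smul _), Real.fourier_add (hKn.ofReal.smul _) (hWint.ofReal.smul _)]
  simp only [Real.fourier_const_smul, Pi.add_apply, Pi.smul_apply, smul_eq_mul,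
    fourier_crossCorr_crossCorr hKn hI]
  ring

/-- Fourier transform of the forward Euler discretization of the linearized CNN
gradient descent PDE: if
`K_{n+1} = K_n − Δt·[(a/2)(Ī·W + β·((K_n ⋆ I) ⋆ I)) + α·K_n]`, where `W` is the
indicator of the square `[−w/2, w/2]²` and `Ī = ∫ I`, then for every frequency `ω`,
`K̂_{n+1}(ω) = A(ω)·K̂_n(ω) − (a/2)·Δt·Ī·Ŵ(ω)` with amplifier
`A(ω) = 1 − Δt·(α + (1/2)·a·β·|Î(ω)|²)`. -/
theorem fourier_linearized_cnn_update (I Kn Knext : EuclideanSpace ℝ (Fin 2) → ℝ)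
    (a β α Δt w : ℝ) (hΔt : 0 < Δt) (hw : 0 < w)
    (hI : Integrable I) (hKn : Integrable Kn) (hKnext : Integrable Knext)
    (W : EuclideanSpace ℝ (Fin 2) → ℝ)
    (hW : W = Set.indicator {x : EuclideanSpace ℝ (Fin 2) | ∀ i, |x i| ≤ w / 2}
      (fun _ => (1 : ℝ)))
    (hupdate : Knext = fun z => Kn z -
      Δt * (a / 2 * ((∫ x, I x) * W z + β * crossCorr (crossCorr Kn I) I z) + α * Kn z)) :
    ∀ ω : EuclideanSpace ℝ (Fin 2),
      𝓕 (fun x => (Knext x : ℂ)) ω =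
        (1 - Δt * (α + 1 / 2 * a * β *
            (‖𝓕 (fun x => (I x : ℂ)) ω‖ : ℂ) ^ 2)) *
          𝓕 (fun x => (Kn x : ℂ)) ω -
        (a / 2 * Δt * (∫ x, I x)) * 𝓕 (fun x => (W x : ℂ)) ω :=
  fourier_linearized_cnn_update_general I Kn Knext a β α Δt w hI hKn W hW hupdate
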